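/- arXiv:1306.6204 — 4 statements merged into one kernel-verified Lean document; each statement's English description precedes it below -/
import Mathlib

section
/- Let a > 0, let ω₀ ∈ ℝ with ω₀ ≠ 0, and let ω̂, ω : (0,a) → ℝ be continuous with ω̂(r) − 1 = O(r²) and ω(r) − ω₀ = O(r²) as r → 0⁺. Then: (i) every differentiable, nowhere-vanishing function φ : (0,a) → ℝ satisfying r·φ'(r) + ω̂(r)·φ(r) = ω(r)·φ(r)² for all r ∈ (0,a) converges to 1/ω₀ as r → 0⁺; in particular, on some interval (0,δ) the sign of φ equals the sign of ω₀. (ii) There exist δ ∈ (0,a] and a differentiable, nowhere-vanishing solution φ : (0,δ) → ℝ of this equation. -/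
/-!
The substitution `χ = φ⁻¹` turns the Bernoulli equation into the linear Fuchsian equation
`r χ' = ω̂ χ - ω`. Writing `χ = ω₀ + r ζ`, the hypotheses `ω̂ - 1 = O(r²)`, `ω - ω₀ = O(r²)` make
`ζ` solve `ζ' = p ζ + q` with `p, q` bounded near `0`, and an integrating factor shows that every
such `ζ` is bounded; hence `χ → ω₀` and `φ → 1 / ω₀`. For existence, solve the linear equation for
`χ` with an integrating factor and invert it near `0`, where `χ ≈ ω₀ ≠ 0`.
-/

open Set Filter Topology

theorem ContinuousOn.exists_hasDerivAt {E : Type*} [NormedAddCommGroup E] [NormedSpace ℝ E]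
    [CompleteSpace E] {f : ℝ → E} {s : Set ℝ} (hf : ContinuousOn f s) (hs : IsOpen s)
    (hs' : s.OrdConnected) : ∃ F : ℝ → E, ∀ x ∈ s, HasDerivAt F (f x) x := by
  rcases s.eq_empty_or_nonempty with rfl | ⟨c, hc⟩
  · exact ⟨f, by simp⟩
  exact ⟨fun x => ∫ t in c..x, f t, fun x hx =>
    intervalIntegral.integral_hasDerivAt_right (hf.mono (hs'.uIcc_subset hc hx)).intervalIntegrable
      (hf.stronglyMeasurableAtFilter hs x hx) (hf.continuousAt (hs.mem_nhds hx))⟩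

theorem exists_abs_le_of_hasDerivAt_of_abs_le {f f' : ℝ → ℝ} {a b K : ℝ}
    (hf : ∀ x ∈ Ioo a b, HasDerivAt f (f' x) x) (hK : ∀ x ∈ Ioo a b, |f' x| ≤ K) :
    ∃ M, ∀ x ∈ Ioo a b, |f x| ≤ M := by
  rcases (Ioo a b).eq_empty_or_nonempty with h | ⟨c, hc⟩
  · exact ⟨0, by simp [h]⟩
  refine ⟨|f c| + K * (b - a), fun x hx => ?_⟩
  have hlip := (convex_Ioo a b).norm_image_sub_le_of_norm_hasDerivWithin_le
    (fun y hy => (hf y hy).hasDerivWithinAt) hK hc hx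
  have hdist : |x - c| ≤ b - a :=
    abs_sub_le_iff.2 ⟨by linarith [hx.2, hc.1], by linarith [hx.1, hc.2]⟩
  have hK0 : 0 ≤ K := (abs_nonneg _).trans (hK c hc)
  simp only [Real.norm_eq_abs] at hlip
  nlinarith [abs_sub_abs_le_abs_sub (f x) (f c)]

theorem eventually_sign_eq_of_tendsto {α : Type*} {l : Filter α} {f : α → ℝ} {c : ℝ}
    (hf : Tendsto f l (𝓝 c)) (hc : c ≠ 0) : ∀ᶠ x in l, Real.sign (f x) = Real.sign c := by
  rcases hc.lt_or_gt with hc | hc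
  · filter_upwards [hf.eventually (gt_mem_nhds hc)] with x hx
    rw [Real.sign_of_neg hx, Real.sign_of_neg hc]
  · filter_upwards [hf.eventually (lt_mem_nhds hc)] with x hx
    rw [Real.sign_of_pos hx, Real.sign_of_pos hc]

theorem exists_forall_Ioo_of_eventually_nhdsGT {P : ℝ → Prop} {c a : ℝ}
    (h : ∀ᶠ x in 𝓝[>] c, P x) (ha : c < a) : ∃ δ, c < δ ∧ δ ≤ a ∧ ∀ x ∈ Ioo c δ, P x := by
  obtain ⟨u, hu, hPu⟩ := mem_nhdsGT_iff_exists_Ioo_subset.1 h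
  exact ⟨min u a, lt_min hu ha, min_le_right _ _, fun x hx =>
    hPu ⟨hx.1, hx.2.trans_le (min_le_left _ _)⟩⟩

section LinearODE

variable {a b : ℝ} {p q : ℝ → ℝ}

theorem exists_hasDerivAt_linear (hp : ContinuousOn p (Ioo a b)) (hq : ContinuousOn q (Ioo a b)) :
    ∃ ζ : ℝ → ℝ, ∀ x ∈ Ioo a b, HasDerivAt ζ (p x * ζ x + q x) x := by
  obtain ⟨P, hP⟩ := hp.exists_hasDerivAt isOpen_Ioo ordConnected_Ioo
  have hPc : ContinuousOn (fun x => Real.exp (-P x)) (Ioo a b) := fun x hx =>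
    (hP x hx).continuousAt.neg.rexp.continuousWithinAt
  obtain ⟨Q, hQ⟩ := (hPc.mul hq).exists_hasDerivAt isOpen_Ioo ordConnected_Ioo
  refine ⟨fun x => Real.exp (P x) * Q x, fun x hx => ?_⟩
  refine ((hP x hx).exp.mul (hQ x hx)).congr_deriv ?_
  rw [Pi.mul_apply, Real.exp_neg]
  field_simp

theorem exists_abs_le_of_hasDerivAt_linear (hp : ContinuousOn p (Ioo a b)) {Kp Kq : ℝ}
    (hKp : ∀ x ∈ Ioo a b, |p x| ≤ Kp) (hKq : ∀ x ∈ Ioo a b, |q x| ≤ Kq) {ζ : ℝ → ℝ}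
    (hζ : ∀ x ∈ Ioo a b, HasDerivAt ζ (p x * ζ x + q x) x) :
    ∃ M, ∀ x ∈ Ioo a b, |ζ x| ≤ M := by
  obtain ⟨P, hP⟩ := hp.exists_hasDerivAt isOpen_Ioo ordConnected_Ioo
  obtain ⟨MP, hMP⟩ := exists_abs_le_of_hasDerivAt_of_abs_le hP hKp
  have hu : ∀ x ∈ Ioo a b,
      HasDerivAt (fun y => Real.exp (-P y) * ζ y) (Real.exp (-P x) * q x) x := by
    intro x hx
    refine ((hP x hx).neg.exp.mul (hζ x hx)).congr_deriv ?_
    simp only [Pi.neg_apply]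
    ring
  obtain ⟨Mu, hMu⟩ := exists_abs_le_of_hasDerivAt_of_abs_le hu (K := Real.exp MP * Kq)
    fun x hx => by
      rw [abs_mul, Real.abs_exp]
      exact mul_le_mul (Real.exp_le_exp.2 ((neg_le_abs (P x)).trans (hMP x hx))) (hKq x hx)
        (abs_nonneg _) (Real.exp_pos _).le
  refine ⟨Real.exp MP * Mu, fun x hx => ?_⟩
  have hζu : ζ x = Real.exp (P x) * (Real.exp (-P x) * ζ x) := by
    rw [← mul_assoc, ← Real.exp_add]; simp
  rw [hζu, abs_mul, Real.abs_exp]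
  exact mul_le_mul (Real.exp_le_exp.2 (le_of_abs_le (hMP x hx))) (hMu x hx)
    (abs_nonneg _) (Real.exp_pos _).le

end LinearODE

section Bernoulli

variable {ω₀ b : ℝ} {ωhat ω : ℝ → ℝ}

theorem hasDerivAt_inv_of_bernoulli {φ : ℝ → ℝ} {r φ' : ℝ} (hφ : HasDerivAt φ φ' r)
    (hφ0 : φ r ≠ 0) (hr : r ≠ 0) (h : r * φ' + ωhat r * φ r = ω r * φ r ^ 2) :
    HasDerivAt (fun x => (φ x)⁻¹) ((ωhat r * (φ r)⁻¹ - ω r) / r) r := by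
  refine (hφ.inv hφ0).congr_deriv ?_
  field_simp
  linear_combination -h

theorem bernoulli_inv_of_hasDerivAt {χ : ℝ → ℝ} {r : ℝ}
    (hχ : HasDerivAt χ ((ωhat r * χ r - ω r) / r) r) (hχ0 : χ r ≠ 0) (hr : r ≠ 0) :
    r * deriv (fun x => (χ x)⁻¹) r + ωhat r * (χ r)⁻¹ = ω r * (χ r)⁻¹ ^ 2 := by
  rw [show deriv (fun x => (χ x)⁻¹) r = _ from (hχ.inv hχ0).deriv]
  field_simp
  ring

theorem exists_hasDerivAt_fuchsian (hc1 : ContinuousOn ωhat (Ioo 0 b))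
    (hc2 : ContinuousOn ω (Ioo 0 b)) :
    ∃ χ : ℝ → ℝ, ∀ r ∈ Ioo 0 b, HasDerivAt χ ((ωhat r * χ r - ω r) / r) r := by
  have hr : ∀ r ∈ Ioo 0 b, r ≠ 0 := fun r hr => hr.1.ne'
  obtain ⟨χ, hχ⟩ := exists_hasDerivAt_linear (hc1.div continuousOn_id hr)
    ((hc2.div continuousOn_id hr).neg)
  refine ⟨χ, fun r hr => (hχ r hr).congr_deriv ?_⟩
  simp only [Pi.div_apply, Pi.neg_apply, id]
  ring

theorem tendsto_nhdsGT_of_hasDerivAt_fuchsian (hb : 0 < b) {C₁ C₂ : ℝ} {χ : ℝ → ℝ}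
    (hc : ContinuousOn ωhat (Ioo 0 b))
    (h1 : ∀ r ∈ Ioo 0 b, |ωhat r - 1| ≤ C₁ * r ^ 2)
    (h2 : ∀ r ∈ Ioo 0 b, |ω r - ω₀| ≤ C₂ * r ^ 2)
    (hχ : ∀ r ∈ Ioo 0 b, HasDerivAt χ ((ωhat r * χ r - ω r) / r) r) :
    Tendsto χ (𝓝[>] 0) (𝓝 ω₀) := by
  have hp : ContinuousOn (fun r => (ωhat r - 1) / r) (Ioo 0 b) :=
    (hc.sub continuousOn_const).div continuousOn_id fun r hr => hr.1.ne'
  have hpK : ∀ r ∈ Ioo 0 b, |(ωhat r - 1) / r| ≤ C₁ * b := by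
    intro r hr
    rw [abs_div, abs_of_pos hr.1, div_le_iff₀ hr.1]
    nlinarith [h1 r hr, abs_nonneg (ωhat r - 1), hr.1, hr.2]
  have hqK : ∀ r ∈ Ioo 0 b, |(ω₀ * ωhat r - ω r) / r ^ 2| ≤ |ω₀| * C₁ + C₂ := by
    intro r hr
    rw [abs_div, abs_of_pos (pow_pos hr.1 2), div_le_iff₀ (pow_pos hr.1 2)]
    calc |ω₀ * ωhat r - ω r| = |ω₀ * (ωhat r - 1) - (ω r - ω₀)| := by ring_nf
      _ ≤ |ω₀| * |ωhat r - 1| + |ω r - ω₀| := by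
        rw [← abs_mul]; exact abs_sub _ _
      _ ≤ |ω₀| * (C₁ * r ^ 2) + C₂ * r ^ 2 := by
        gcongr
        exacts [h1 r hr, h2 r hr]
      _ = (|ω₀| * C₁ + C₂) * r ^ 2 := by ring
  have hζ : ∀ r ∈ Ioo 0 b, HasDerivAt (fun x => (χ x - ω₀) / x)
      ((ωhat r - 1) / r * ((χ r - ω₀) / r) + (ω₀ * ωhat r - ω r) / r ^ 2) r := by
    intro r hr
    have hr0 : r ≠ 0 := hr.1.ne'
    refine (((hχ r hr).sub_const ω₀).div (hasDerivAt_id r) hr0).congr_deriv ?_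
    simp only [id]
    field_simp
    ring
  obtain ⟨M, hM⟩ := exists_abs_le_of_hasDerivAt_linear hp hpK hqK hζ
  rw [← tendsto_sub_nhds_zero_iff]
  refine squeeze_zero_norm' (a := fun r => M * r) ?_ ?_
  · filter_upwards [Ioo_mem_nhdsGT hb] with r hr
    have := hM r hr
    rwa [abs_div, abs_of_pos hr.1, div_le_iff₀ hr.1] at this
  · exact tendsto_nhdsWithin_of_tendsto_nhds (by simpa using (continuous_const_mul M).tendsto 0)

end Bernoulli

/-- The singular Bernoulli-type ODE `r φ' + ω̂ φ = ω φ²` with `ω̂ = 1 + O(r²)`,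
`ω = ω₀ + O(r²)`, `ω₀ ≠ 0`:
(i) every differentiable nowhere-vanishing solution on `(0,a)` tends to `1/ω₀` at `0⁺`
and has the sign of `ω₀` near `0⁺`;
(ii) a differentiable nowhere-vanishing solution exists on some `(0,δ)`. -/
theorem bernoulli_fuchsian (a ω₀ : ℝ) (ha : 0 < a) (hω₀ : ω₀ ≠ 0)
    (ωhat ω : ℝ → ℝ)
    (hc1 : ContinuousOn ωhat (Set.Ioo (0 : ℝ) a))
    (hc2 : ContinuousOn ω (Set.Ioo (0 : ℝ) a))
    (hO1 : ∃ C δ : ℝ, 0 < C ∧ 0 < δ ∧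
      ∀ r : ℝ, 0 < r → r < δ → |ωhat r - 1| ≤ C * r ^ 2)
    (hO2 : ∃ C δ : ℝ, 0 < C ∧ 0 < δ ∧
      ∀ r : ℝ, 0 < r → r < δ → |ω r - ω₀| ≤ C * r ^ 2) :
    (∀ φ : ℝ → ℝ,
      (∀ r ∈ Set.Ioo (0 : ℝ) a, DifferentiableAt ℝ φ r) →
      (∀ r ∈ Set.Ioo (0 : ℝ) a, φ r ≠ 0) →
      (∀ r ∈ Set.Ioo (0 : ℝ) a, r * deriv φ r + ωhat r * φ r = ω r * φ r ^ 2) →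
      Filter.Tendsto φ (nhdsWithin (0 : ℝ) (Set.Ioi 0)) (nhds (1 / ω₀)) ∧
      ∃ δ : ℝ, 0 < δ ∧ δ ≤ a ∧
        ∀ r : ℝ, 0 < r → r < δ → Real.sign (φ r) = Real.sign ω₀) ∧
    (∃ δ : ℝ, 0 < δ ∧ δ ≤ a ∧ ∃ φ : ℝ → ℝ,
      ∀ r ∈ Set.Ioo (0 : ℝ) δ, DifferentiableAt ℝ φ r ∧ φ r ≠ 0 ∧
        r * deriv φ r + ωhat r * φ r = ω r * φ r ^ 2) := by
  obtain ⟨C₁, δ₁, -, hδ₁, h1⟩ := hO1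
  obtain ⟨C₂, δ₂, -, hδ₂, h2⟩ := hO2
  set b := min a (min δ₁ δ₂)
  have hb : 0 < b := lt_min ha (lt_min hδ₁ hδ₂)
  have hba : Ioo 0 b ⊆ Ioo 0 a := Ioo_subset_Ioo_right (min_le_left _ _)
  have hlim (χ : ℝ → ℝ) := tendsto_nhdsGT_of_hasDerivAt_fuchsian (χ := χ) hb (hc1.mono hba)
    (fun r hr => h1 r hr.1 (hr.2.trans_le ((min_le_right _ _).trans (min_le_left _ _))))
    (fun r hr => h2 r hr.1 (hr.2.trans_le ((min_le_right _ _).trans (min_le_right _ _))))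
  refine ⟨fun φ hφd hφ0 hode => ?_, ?_⟩
  · have hφlim : Tendsto φ (𝓝[>] 0) (𝓝 (1 / ω₀)) := by
      simpa [one_div] using (hlim _ fun r hr => hasDerivAt_inv_of_bernoulli
        (hφd r (hba hr)).hasDerivAt (hφ0 r (hba hr)) hr.1.ne' (hode r (hba hr))).inv₀ hω₀
    obtain ⟨δ, hδ, hδa, hsign⟩ := exists_forall_Ioo_of_eventually_nhdsGT
      (eventually_sign_eq_of_tendsto hφlim (one_div_ne_zero hω₀)) ha
    refine ⟨hφlim, δ, hδ, hδa, fun r hr0 hrδ => ?_⟩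
    rw [hsign r ⟨hr0, hrδ⟩, one_div, Real.sign_inv]
  · obtain ⟨χ, hχ⟩ := exists_hasDerivAt_fuchsian (hc1.mono hba) (hc2.mono hba)
    obtain ⟨δ, hδ, hδb, hχ0⟩ :=
      exists_forall_Ioo_of_eventually_nhdsGT ((hlim χ hχ).eventually_ne hω₀) hb
    refine ⟨δ, hδ, hδb.trans (min_le_left _ _), fun x => (χ x)⁻¹, fun r hr => ?_⟩
    have hrb : r ∈ Ioo 0 b := ⟨hr.1, hr.2.trans_le hδb⟩
    exact ⟨((hχ r hrb).inv (hχ0 r hr)).differentiableAt, inv_ne_zero (hχ0 r hr),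
      bernoulli_inv_of_hasDerivAt (hχ r hrb) (hχ0 r hr) hr.1.ne'⟩
end

section
/- Let a > 0 and let f : (0,a) → ℝ be differentiable with f'(r) + (1/2)·f(r)² = 0 for every r ∈ (0,a). If the function r ↦ f(r) − 2/r is bounded on (0,δ) for some δ > 0, then f(r) = 2/r for all r ∈ (0,a). -/
/-- The Riccati equation `f' + f²/2 = 0` on `(0,a)`: if `f − 2/r` is bounded near
`0⁺`, then `f(r) = 2/r` on all of `(0,a)`. -/
theorem riccati_expansion_tau (a : ℝ) (ha : 0 < a) (f : ℝ → ℝ)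
    (hdiff : ∀ r ∈ Set.Ioo (0 : ℝ) a, DifferentiableAt ℝ f r)
    (hode : ∀ r ∈ Set.Ioo (0 : ℝ) a, deriv f r + (1 / 2) * f r ^ 2 = 0)
    (hbd : ∃ δ M : ℝ, 0 < δ ∧ ∀ r : ℝ, 0 < r → r < δ → |f r - 2 / r| ≤ M) :
    ∀ r ∈ Set.Ioo (0 : ℝ) a, f r = 2 / r := by
  obtain ⟨δ, M, hδ, hM⟩ := hbd
  set u : ℝ → ℝ := fun r => r ^ 2 * f r - 2 * r with hu_def
  -- derivative of u
  have hu' : ∀ r ∈ Set.Ioo (0 : ℝ) a, HasDerivAt u (-(u r) ^ 2 / (2 * r ^ 2)) r := by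
    intro r hr
    have hr0 : r ≠ 0 := ne_of_gt hr.1
    have hf' : HasDerivAt f (deriv f r) r := (hdiff r hr).hasDerivAt
    have h1 : HasDerivAt u ((2 : ℕ) * r ^ 1 * f r + r ^ 2 * deriv f r - 2 * 1) r :=
      ((hasDerivAt_pow 2 r).mul hf').sub ((hasDerivAt_id r).const_mul 2)
    have hode' : deriv f r = -(1 / 2) * f r ^ 2 := by have := hode r hr; linarith
    convert h1 using 1
    rw [hode']
    simp only [hu_def]
    field_simp
    ring
  -- the bound near 0 in terms of u
  set M₁ : ℝ := max M 1 with hM₁def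
  have hM₁pos : (0 : ℝ) < M₁ := lt_of_lt_of_le one_pos (le_max_right _ _)
  have hM₁ : ∀ r : ℝ, 0 < r → r < δ → |u r| ≤ M₁ * r ^ 2 := by
    intro r hr hrδ
    have hr0 : r ≠ 0 := ne_of_gt hr
    have : u r = r ^ 2 * (f r - 2 / r) := by
      simp only [hu_def]; field_simp
    rw [this, abs_mul, abs_of_nonneg (sq_nonneg r)]
    calc r ^ 2 * |f r - 2 / r| ≤ r ^ 2 * M := by
          exact mul_le_mul_of_nonneg_left (hM r hr hrδ) (sq_nonneg r)
      _ ≤ M₁ * r ^ 2 := by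
          rw [mul_comm]
          exact mul_le_mul_of_nonneg_right (le_max_left _ _) (sq_nonneg r)
  intro r₀ hr₀
  have hr₀0 : (0 : ℝ) < r₀ := hr₀.1
  -- it suffices to show u r₀ = 0
  suffices hu0 : u r₀ = 0 by
    have : r₀ ^ 2 * f r₀ - 2 * r₀ = 0 := hu0
    have hr0 : r₀ ≠ 0 := ne_of_gt hr₀0
    field_simp
    nlinarith [this]
  set δ₀ : ℝ := min δ r₀ with hδ₀def
  have hδ₀pos : 0 < δ₀ := lt_min hδ hr₀0
  have hδ₀r₀ : δ₀ ≤ r₀ := min_le_right _ _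
  have hδ₀δ : δ₀ ≤ δ := min_le_left _ _
  -- compact bound on [δ₀/2, r₀]
  have hsub : Set.Icc (δ₀ / 2) r₀ ⊆ Set.Ioo (0 : ℝ) a := fun x hx =>
    ⟨lt_of_lt_of_le (by linarith) hx.1, lt_of_le_of_lt hx.2 hr₀.2⟩
  have hucont : ContinuousOn u (Set.Icc (δ₀ / 2) r₀) := fun x hx =>
    ((hu' x (hsub hx)).differentiableAt.continuousAt).continuousWithinAt
  obtain ⟨C, hC⟩ := (isCompact_Icc).exists_bound_of_continuousOn hucont
  have hC0 : 0 ≤ C := le_trans (abs_nonneg _) (hC r₀ ⟨by linarith, le_refl _⟩)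
  set K : ℝ := max M₁ (C / (2 * (δ₀ / 2) ^ 2)) with hKdef
  have hK0 : 0 < K := lt_of_lt_of_le hM₁pos (le_max_left _ _)
  -- global bound on |u t| / (2 t²)
  have hK : ∀ t : ℝ, 0 < t → t ≤ r₀ → |u t| / (2 * t ^ 2) ≤ K := by
    intro t ht htr
    by_cases hcase : t < δ₀
    · have h1 : |u t| ≤ M₁ * t ^ 2 := hM₁ t ht (lt_of_lt_of_le hcase hδ₀δ)
      have h2 : (0 : ℝ) < 2 * t ^ 2 := by positivity
      calc |u t| / (2 * t ^ 2) ≤ M₁ * t ^ 2 / (2 * t ^ 2) :=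
            div_le_div_of_nonneg_right h1 h2.le |>.trans_eq rfl
        _ = M₁ / 2 := by field_simp
        _ ≤ M₁ := by linarith
        _ ≤ K := le_max_left _ _
    · push_neg at hcase
      have htmem : t ∈ Set.Icc (δ₀ / 2) r₀ := ⟨by linarith, htr⟩
      have h1 : |u t| ≤ C := hC t htmem
      have h3 : 2 * (δ₀ / 2) ^ 2 ≤ 2 * t ^ 2 := by nlinarith
      have h4 : (0 : ℝ) < 2 * (δ₀ / 2) ^ 2 := by positivity
      calc |u t| / (2 * t ^ 2) ≤ C / (2 * (δ₀ / 2) ^ 2) := div_le_div₀ hC0 h1 h4 h3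
        _ ≤ K := le_max_right _ _
  -- Gronwall on [s, r₀] for s small
  have key : ∀ s ∈ Set.Ioo (0 : ℝ) δ₀, |u r₀| ≤ M₁ * s ^ 2 * Real.exp (K * r₀) := by
    intro s hs
    have hs0 : (0 : ℝ) < s := hs.1
    have hsr₀ : s ≤ r₀ := le_trans hs.2.le hδ₀r₀
    have hIccsub : Set.Icc s r₀ ⊆ Set.Ioo (0 : ℝ) a := fun x hx =>
      ⟨lt_of_lt_of_le hs0 hx.1, lt_of_le_of_lt hx.2 hr₀.2⟩
    have hgron := norm_le_gronwallBound_of_norm_deriv_right_le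
      (f := u) (f' := fun t => -(u t) ^ 2 / (2 * t ^ 2)) (δ := M₁ * s ^ 2) (K := K) (ε := 0)
      (a := s) (b := r₀)
      (fun x hx => ((hu' x (hIccsub hx)).differentiableAt.continuousAt).continuousWithinAt)
      (fun x hx => (hu' x (hIccsub ⟨hx.1, hx.2.le⟩)).hasDerivWithinAt)
      (by
        rw [Real.norm_eq_abs]
        exact hM₁ s hs0 (lt_of_lt_of_le hs.2 hδ₀δ))
      (by
        intro x hx
        have hx0 : (0 : ℝ) < x := lt_of_lt_of_le hs0 hx.1
        rw [Real.norm_eq_abs, Real.norm_eq_abs, add_zero]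
        have h1 : |(-(u x) ^ 2 / (2 * x ^ 2))| = |u x| * (|u x| / (2 * x ^ 2)) := by
          rw [abs_div, abs_neg, abs_pow, sq_abs,
            abs_of_nonneg (by positivity : (0 : ℝ) ≤ 2 * x ^ 2), ← sq_abs, sq, mul_div_assoc]
        rw [h1, mul_comm (K : ℝ) |u x|]
        exact mul_le_mul_of_nonneg_left (hK x hx0 hx.2.le) (abs_nonneg _))
    have := hgron r₀ ⟨hsr₀, le_refl _⟩
    rw [Real.norm_eq_abs, gronwallBound_ε0] at this
    calc |u r₀| ≤ M₁ * s ^ 2 * Real.exp (K * (r₀ - s)) := this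
      _ ≤ M₁ * s ^ 2 * Real.exp (K * r₀) := by
          apply mul_le_mul_of_nonneg_left _ (by positivity)
          exact Real.exp_le_exp.2 (by nlinarith)
  -- take s → 0⁺
  have htend : Filter.Tendsto (fun s : ℝ => M₁ * s ^ 2 * Real.exp (K * r₀))
      (nhdsWithin 0 (Set.Ioi 0)) (nhds 0) := by
    have : Filter.Tendsto (fun s : ℝ => M₁ * s ^ 2 * Real.exp (K * r₀)) (nhds 0) (nhds 0) := by
      have hcont : Continuous fun s : ℝ => M₁ * s ^ 2 * Real.exp (K * r₀) :=
        ((continuous_const.mul (continuous_pow 2)).mul continuous_const)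
      have := hcont.tendsto 0
      simpa using this
    exact this.mono_left nhdsWithin_le_nhds
  have habs : |u r₀| ≤ 0 := by
    refine ge_of_tendsto htend ?_
    filter_upwards [Ioo_mem_nhdsGT_of_mem (by exact ⟨le_refl _, hδ₀pos⟩ :
      (0 : ℝ) ∈ Set.Ico 0 δ₀)] with s hs
    exact key s hs
  exact abs_eq_zero.1 (le_antisymm habs (abs_nonneg _))
end

section
/- Let E := EuclideanSpace ℝ (Fin 3) and let φ : E → ℝ be cone-smooth, i.e. φ(y) = f(y) + ‖y‖·g(y) for all y with f, g : E → ℝ of class C^∞. Then Real.exp ∘ φ is cone-smooth: there exist C^∞ functions f₁, g₁ : E → ℝ with exp(φ(y)) = f₁(y) + ‖y‖·g₁(y) for all y ∈ E. -/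
/-!
Write `φ = f + r g` with `r = ‖y‖`. Then `exp φ = exp f · (cosh (r g) + sinh (r g))`, and the
power series of `cosh` and `sinh` show `cosh x = C (x²)` and `sinh x = x · S (x²)` for entire
functions `C`, `S`. Since `r² = ‖y‖²` is smooth,
`exp φ = exp f · C (r² g²) + r · exp f · g · S (r² g²)` is again cone-smooth.
-/

open FormalMultilinearSeries

namespace FormalMultilinearSeries

variable {𝕜 E : Type*} [NontriviallyNormedField 𝕜] [NormedRing E] [NormedAlgebra 𝕜 E]

theorem ofScalars_radius_eq_top_of_norm_le_inv_factorial [NormOneClass E] {c : ℕ → 𝕜}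
    (hc : ∀ n, ‖c n‖ ≤ (n.factorial : ℝ)⁻¹) : (ofScalars E c).radius = ⊤ := by
  refine radius_eq_top_of_summable_norm _ fun r ↦ ?_
  refine (Real.summable_pow_div_factorial r).of_nonneg_of_le (fun n ↦ by positivity) fun n ↦ ?_
  rw [ofScalars_norm, div_eq_mul_inv, mul_comm]
  gcongr
  exact hc n

theorem contDiff_ofScalarsSum_of_radius_eq_top [CompleteSpace E] {c : ℕ → 𝕜}
    (hc : (ofScalars E c).radius = ⊤) {n : WithTop ℕ∞} :
    ContDiff 𝕜 n (ofScalarsSum (E := E) c) := by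
  have hball := (ofScalars E c).hasFPowerSeriesOnBall (hc ▸ ENNReal.zero_lt_top)
  refine AnalyticOnNhd.contDiff fun x _ ↦ hball.analyticAt_of_mem ?_
  simp [hc]

end FormalMultilinearSeries

theorem contDiff_ofScalarsSum_inv_factorial_comp {a : ℕ → ℕ} (ha : ∀ k, k ≤ a k)
    {n : WithTop ℕ∞} : ContDiff ℝ n (ofScalarsSum fun k ↦ ((a k).factorial : ℝ)⁻¹ : ℝ → ℝ) := by
  refine contDiff_ofScalarsSum_of_radius_eq_top
    (ofScalars_radius_eq_top_of_norm_le_inv_factorial fun k ↦ ?_)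
  rw [norm_inv, Real.norm_natCast]
  gcongr
  exact ha k

noncomputable def coshSqrt : ℝ → ℝ := ofScalarsSum fun n ↦ ((2 * n).factorial : ℝ)⁻¹

noncomputable def sinhSqrtDivSqrt : ℝ → ℝ := ofScalarsSum fun n ↦ ((2 * n + 1).factorial : ℝ)⁻¹

theorem contDiff_coshSqrt {n : WithTop ℕ∞} : ContDiff ℝ n coshSqrt :=
  contDiff_ofScalarsSum_inv_factorial_comp fun k ↦ by omega

theorem contDiff_sinhSqrtDivSqrt {n : WithTop ℕ∞} : ContDiff ℝ n sinhSqrtDivSqrt :=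
  contDiff_ofScalarsSum_inv_factorial_comp fun k ↦ by omega

theorem Real.cosh_eq_coshSqrt_sq (x : ℝ) : Real.cosh x = coshSqrt (x ^ 2) := by
  rw [coshSqrt, ofScalars_sum_eq, Real.cosh_eq_tsum]
  refine tsum_congr fun n ↦ ?_
  rw [smul_eq_mul, ← pow_mul, div_eq_inv_mul]

theorem Real.sinh_eq_mul_sinhSqrtDivSqrt_sq (x : ℝ) :
    Real.sinh x = x * sinhSqrtDivSqrt (x ^ 2) := by
  rw [sinhSqrtDivSqrt, ofScalars_sum_eq, ← tsum_mul_left, Real.sinh_eq_tsum]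
  refine tsum_congr fun n ↦ ?_
  rw [smul_eq_mul, ← pow_mul, pow_succ]
  ring

theorem Real.exp_eq_coshSqrt_add_mul_sinhSqrtDivSqrt (x : ℝ) :
    Real.exp x = coshSqrt (x ^ 2) + x * sinhSqrtDivSqrt (x ^ 2) := by
  rw [← Real.cosh_add_sinh, Real.cosh_eq_coshSqrt_sq, Real.sinh_eq_mul_sinhSqrtDivSqrt_sq]

section ConeSmooth

variable {E : Type*} [NormedAddCommGroup E] [InnerProductSpace ℝ E]

/-- `φ` is a `C^n` function on the light cone `{y⁰ = ‖y‖}`, parametrized by `y`. -/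
def IsConeSmooth (n : WithTop ℕ∞) (φ : E → ℝ) : Prop :=
  ∃ f g : E → ℝ, ContDiff ℝ n f ∧ ContDiff ℝ n g ∧ ∀ y, φ y = f y + ‖y‖ * g y

theorem IsConeSmooth.exp {n : WithTop ℕ∞} {φ : E → ℝ} (hφ : IsConeSmooth n φ) :
    IsConeSmooth n (Real.exp ∘ φ) := by
  obtain ⟨f, g, hf, hg, hφ⟩ := hφ
  have hsq : ContDiff ℝ n fun y ↦ (‖y‖ * g y) ^ 2 := by
    simpa only [mul_pow] using (contDiff_norm_sq ℝ).mul (hg.pow 2)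
  refine ⟨fun y ↦ Real.exp (f y) * coshSqrt ((‖y‖ * g y) ^ 2),
    fun y ↦ Real.exp (f y) * (g y * sinhSqrtDivSqrt ((‖y‖ * g y) ^ 2)),
    (Real.contDiff_exp.comp hf).mul (contDiff_coshSqrt.comp hsq),
    (Real.contDiff_exp.comp hf).mul (hg.mul (contDiff_sinhSqrtDivSqrt.comp hsq)), fun y ↦ ?_⟩
  rw [Function.comp_apply, hφ, Real.exp_add,
    Real.exp_eq_coshSqrt_add_mul_sinhSqrtDivSqrt (‖y‖ * g y)]
  ring

end ConeSmooth

/-- Lemma A.2 (i), k = ∞: the exponential of a cone-smooth function is cone-smooth. -/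
theorem cone_smooth_exp (φ : EuclideanSpace ℝ (Fin 3) → ℝ)
    (f g : EuclideanSpace ℝ (Fin 3) → ℝ)
    (hf : ContDiff ℝ (⊤ : ℕ∞) f) (hg : ContDiff ℝ (⊤ : ℕ∞) g)
    (hφ : ∀ y : EuclideanSpace ℝ (Fin 3), φ y = f y + ‖y‖ * g y) :
    ∃ f₁ g₁ : EuclideanSpace ℝ (Fin 3) → ℝ,
      ContDiff ℝ (⊤ : ℕ∞) f₁ ∧ ContDiff ℝ (⊤ : ℕ∞) g₁ ∧
      ∀ y : EuclideanSpace ℝ (Fin 3), Real.exp (φ y) = f₁ y + ‖y‖ * g₁ y :=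
  IsConeSmooth.exp ⟨f, g, hf, hg, hφ⟩
end

section
/- Let E := EuclideanSpace ℝ (Fin 3) and let φ : E → ℝ be cone-smooth, i.e. φ(y) = f(y) + ‖y‖·g(y) for all y with f, g : E → ℝ of class C^∞. Then the function y ↦ ∫₀¹ φ(t • y) dt is cone-smooth: there exist C^∞ functions f₁, g₁ : E → ℝ with ∫₀¹ φ(t • y) dt = f₁(y) + ‖y‖·g₁(y) for all y ∈ E. -/
/-! For `0 ≤ t` we have `‖t • y‖ = t * ‖y‖`, so `∫₀¹ φ(t • y) dt` splits as
`∫₀¹ f(t • y) dt + ‖y‖ * ∫₀¹ t * g(t • y) dt`. Both integrals are integrals over a compact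
interval of smooth functions of `(y, t)`, hence smooth in `y` by differentiating under the
integral sign. -/

open MeasureTheory Set Interval

universe u

section ParametricIntervalIntegral

variable {H G : Type u} [NormedAddCommGroup H] [NormedSpace ℝ H] [ProperSpace H]
  [NormedAddCommGroup G] [NormedSpace ℝ G]

theorem hasFDerivAt_intervalIntegral_of_contDiff {F : H × ℝ → G} (hF : ContDiff ℝ 1 F)
    (a b : ℝ) (x₀ : H) :
    HasFDerivAt (fun x => ∫ t in a..b, F (x, t))
      (∫ t in a..b, (fderiv ℝ F (x₀, t)).comp (ContinuousLinearMap.inl ℝ H ℝ)) x₀ := by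
  set F' : H × ℝ → H →L[ℝ] G := fun p => (fderiv ℝ F p).comp (ContinuousLinearMap.inl ℝ H ℝ)
  have hF'_cont : Continuous F' :=
    (hF.continuous_fderiv one_ne_zero).clm_comp continuous_const
  have hslice : ∀ {K : Type u} [TopologicalSpace K] {k : H × ℝ → K}, Continuous k →
      ∀ x, Continuous fun t : ℝ => k (x, t) :=
    fun hk x => hk.comp (continuous_const.prodMk continuous_id)
  obtain ⟨C, hC⟩ := ((isCompact_closedBall x₀ 1).prod isCompact_uIcc).exists_bound_of_continuousOn
    (hF'_cont.continuousOn (s := Metric.closedBall x₀ 1 ×ˢ [[a, b]]))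
  refine intervalIntegral.hasFDerivAt_integral_of_dominated_of_fderiv_le
    (F' := fun x t => F' (x, t)) (bound := fun _ => C) (Metric.ball_mem_nhds x₀ one_pos)
    (.of_forall fun x => (hslice hF.continuous x).aestronglyMeasurable)
    ((hslice hF.continuous x₀).intervalIntegrable a b)
    (hslice hF'_cont x₀).aestronglyMeasurable
    (.of_forall fun t ht x hx =>
      hC (x, t) ⟨Metric.ball_subset_closedBall hx, uIoc_subset_uIcc ht⟩)
    intervalIntegrable_const (.of_forall fun t _ x _ => ?_)
  have hpair : HasFDerivAt (fun x : H => (x, t)) (ContinuousLinearMap.inl ℝ H ℝ) x :=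
    (hasFDerivAt_id x).prodMk (hasFDerivAt_const t x)
  exact ((hF.differentiable one_ne_zero) (x, t)).hasFDerivAt.comp x hpair

theorem contDiff_intervalIntegral_of_contDiff_nat (n : ℕ) {F : H × ℝ → G}
    (hF : ContDiff ℝ n F) (a b : ℝ) : ContDiff ℝ n (fun x => ∫ t in a..b, F (x, t)) := by
  induction n generalizing G with
  | zero =>
    rw [Nat.cast_zero, contDiff_zero] at hF ⊢
    exact intervalIntegral.continuous_parametric_intervalIntegral_of_continuous'
      (f := fun x t => F (x, t)) hF a b
  | succ n ih =>
    have hF1 : ContDiff ℝ 1 F := hF.of_le (by exact_mod_cast Nat.le_add_left 1 n)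
    have hderiv := hasFDerivAt_intervalIntegral_of_contDiff hF1 a b
    rw [Nat.cast_succ, contDiff_succ_iff_fderiv]
    refine ⟨fun x => (hderiv x).differentiableAt, by simp, ?_⟩
    rw [funext fun x => (hderiv x).fderiv]
    exact ih (F := fun p => (fderiv ℝ F p).comp (ContinuousLinearMap.inl ℝ H ℝ))
      ((hF.fderiv_right le_rfl).clm_comp contDiff_const)

theorem contDiff_intervalIntegral_of_contDiff {n : ℕ∞} {F : H × ℝ → G}
    (hF : ContDiff ℝ n F) (a b : ℝ) : ContDiff ℝ n (fun x => ∫ t in a..b, F (x, t)) := by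
  induction n with
  | top => exact contDiff_infty.2 fun k =>
      contDiff_intervalIntegral_of_contDiff_nat k (hF.of_le (by exact_mod_cast le_top)) a b
  | coe k => exact contDiff_intervalIntegral_of_contDiff_nat k hF a b

end ParametricIntervalIntegral

/-- Lemma A.2 (ii), k = ∞: for cone-smooth `φ`, the radial average
`y ↦ ∫₀¹ φ(t • y) dt` (i.e. `r⁻¹ ∫₀^r φ`) is cone-smooth. -/
theorem cone_smooth_radial_average (φ : EuclideanSpace ℝ (Fin 3) → ℝ)
    (f g : EuclideanSpace ℝ (Fin 3) → ℝ)
    (hf : ContDiff ℝ (⊤ : ℕ∞) f) (hg : ContDiff ℝ (⊤ : ℕ∞) g)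
    (hφ : ∀ y : EuclideanSpace ℝ (Fin 3), φ y = f y + ‖y‖ * g y) :
    ∃ f₁ g₁ : EuclideanSpace ℝ (Fin 3) → ℝ,
      ContDiff ℝ (⊤ : ℕ∞) f₁ ∧ ContDiff ℝ (⊤ : ℕ∞) g₁ ∧
      ∀ y : EuclideanSpace ℝ (Fin 3),
        (∫ t in (0 : ℝ)..1, φ (t • y)) = f₁ y + ‖y‖ * g₁ y := by
  have hsmul : ContDiff ℝ (⊤ : ℕ∞) fun p : EuclideanSpace ℝ (Fin 3) × ℝ => p.2 • p.1 :=
    contDiff_snd.smul contDiff_fst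
  refine ⟨fun y => ∫ t in (0 : ℝ)..1, f (t • y), fun y => ∫ t in (0 : ℝ)..1, t * g (t • y),
    contDiff_intervalIntegral_of_contDiff (hf.comp hsmul) 0 1,
    contDiff_intervalIntegral_of_contDiff (contDiff_snd.mul (hg.comp hsmul)) 0 1, fun y => ?_⟩
  have hsplit : ∀ t ∈ [[(0 : ℝ), 1]], φ (t • y) = f (t • y) + ‖y‖ * (t * g (t • y)) := by
    intro t ht
    rw [uIcc_of_le zero_le_one] at ht
    rw [hφ, norm_smul, Real.norm_of_nonneg ht.1]
    ring
  have hfc := hf.continuous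
  have hgc := hg.continuous
  rw [intervalIntegral.integral_congr hsplit, intervalIntegral.integral_add
    (Continuous.intervalIntegrable (by fun_prop) 0 1)
    (Continuous.intervalIntegrable (by fun_prop) 0 1), intervalIntegral.integral_const_mul]
end
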